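/- The flow-sensitive residual residual₂(D, P^S_Σ) = reach(D ↾ {d ∈ δ | ∃ t ∈ P^S_Σ ⇓ OId, uses(t, d)}), which removes all transitions of D not used by any ground trace generated by the static program and then applies the reachability reduction, is equivalent to the original DATE with respect to the static program: residual₂(D, P^S_Σ) ≅_{P^S_Σ} D. -/

import Mathlib

open Classical

/-- A property automaton over states `Q` and alphabet `E`: a deterministic and
total transition relation is represented as a transition function. -/
structure PA (Q : Type*) (E : Type*) where
  init : Q
  bad : Set Q
  next : Q → E → Q

namespace PA

variable {Q E : Type*}

/-- Iterated application of the transition function along a ground trace. -/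
def run (π : PA Q E) (q : Q) (t : List E) : Q := t.foldl π.next q

/-- A ground trace satisfies a property automaton iff no prefix of it leads
from the initial state to a bad state. -/
def Sat (t : List E) (π : PA Q E) : Prop :=
  ∀ t' : List E, t' <+: t → π.run π.init t' ∉ π.bad

/-- Equivalence of two property automata with respect to a set of ground traces. -/
def EquivOn (T : Set (List E)) (π π' : PA Q E) : Prop :=
  ∀ t ∈ T, Sat t π ↔ Sat t π'

end PA

/-- A static program: a set of static parametrised traces over identifiers `α`,
together with a must-alias equivalence relation and a may-alias relation. -/
structure SProg (α : Type*) (E : Type*) where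
  traces : Set (List (α × E))
  must : α → α → Prop
  may : α → α → Prop
  must_equiv : Equivalence must
  must_sub_may : ∀ {x y : α}, must x y → may x y

namespace SProg

variable {α E : Type*}

-- Projection of a static parametrised trace onto an identifier `x`,
-- yielding the set of possible ground traces.
open Classical in
noncomputable def proj (P : SProg α E) (x : α) : List (α × E) → Set (List E)
  | [] => {[]}
  | (x', e) :: st =>
      if P.must x x' then (e :: ·) '' P.proj x st
      else if P.may x x' then P.proj x st ∪ (e :: ·) '' P.proj x st
      else P.proj x st

/-- The projection of a static program onto a single identifier. -/
def projId (P : SProg α E) (x : α) : Set (List E) :=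
  {t | ∃ st ∈ P.traces, t ∈ P.proj x st}

/-- The projection of a static program onto all identifiers (`P ⇓ OId`). -/
def projAll (P : SProg α E) : Set (List E) :=
  {t | ∃ st ∈ P.traces, ∃ x : α, t ∈ P.proj x st}

end SProg

/-- Satisfaction of a property automaton by a static parametrised trace:
every projection onto every identifier satisfies the automaton. -/
def PA.SSat {α Q E : Type*} (P : SProg α E) (st : List (α × E)) (π : PA Q E) : Prop :=
  ∀ x : α, ∀ t ∈ P.proj x st, PA.Sat t π

/-- Equivalence of two property automata with respect to a static program. -/
def PA.SEquiv {α Q E : Type*} (P : SProg α E) (π π' : PA Q E) : Prop :=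
  ∀ st ∈ P.traces, PA.SSat P st π ↔ PA.SSat P st π'

/-- A transition of a DATE: source state, event, condition, action, target state. -/
structure DTrans (Q : Type*) (E : Type*) (Θ : Type*) where
  src : Q
  ev : E
  cond : Θ → Bool
  act : Θ → Θ
  tgt : Q

/-- A DATE (without timers/channels): states `Q`, events `E`, monitoring
variable states `Θ`, initial state, initial monitoring state, bad states,
and a transition relation. -/
structure DATE (Q : Type*) (E : Type*) (Θ : Type*) where
  init : Q
  th0 : Θ
  bad : Set Q
  delta : Set (DTrans Q E Θ)

namespace DATE

variable {Q E Θ : Type*}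

/-- Determinism: from each state, any two distinct transitions with the same
event have conditions that are never simultaneously true. -/
def Deterministic (D : DATE Q E Θ) : Prop :=
  ∀ d ∈ D.delta, ∀ d' ∈ D.delta,
    d.src = d'.src → d.ev = d'.ev → d ≠ d' →
      ∀ θ : Θ, ¬(d.cond θ = true ∧ d'.cond θ = true)

/-- The concrete transition function `Δ`. -/
noncomputable def step (D : DATE Q E Θ) (s : Q × Θ) (e : E) : Q × Θ :=
  if h : ∃ d ∈ D.delta, d.src = s.1 ∧ d.ev = e ∧ d.cond s.2 = true
  then (h.choose.tgt, h.choose.act s.2)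
  else s

/-- `Δ*`: iterated concrete transition function along a ground trace. -/
noncomputable def run (D : DATE Q E Θ) (s : Q × Θ) (t : List E) : Q × Θ :=
  t.foldl D.step s

/-- A ground trace satisfies a DATE iff no prefix of it drives `Δ*` from the
initial configuration into a bad state. -/
def Sat (t : List E) (D : DATE Q E Θ) : Prop :=
  ∀ t' : List E, t' <+: t → (D.run (D.init, D.th0) t').1 ∉ D.bad

/-- Equivalence of two DATEs with respect to a set of ground traces. -/
def EquivOn (T : Set (List E)) (D D' : DATE Q E Θ) : Prop :=
  ∀ t ∈ T, Sat t D ↔ Sat t D'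

/-- The static transition relation `q →e_approx q'`. -/
def ApproxStep (D : DATE Q E Θ) (q : Q) (e : E) (q' : Q) : Prop :=
  (∃ d ∈ D.delta, d.src = q ∧ d.ev = e ∧ d.tgt = q' ∧ ¬ ∀ θ : Θ, d.cond θ = false)
  ∨ (q' = q ∧ ¬ ∃ d ∈ D.delta, d.src = q ∧ d.ev = e ∧ d.tgt ≠ q ∧ ∀ θ : Θ, d.cond θ = true)

/-- The static transition function on sets of states. -/
def approxSet (D : DATE Q E Θ) (S : Set Q) (e : E) : Set Q :=
  {q' | ∃ q ∈ S, D.ApproxStep q e q'}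

/-- `approxΔ*`: iterated static transition function along a ground trace. -/
def approxRun (D : DATE Q E Θ) (S : Set Q) (t : List E) : Set Q :=
  t.foldl D.approxSet S

/-- `q ↪ q'`: `q'` is reachable from `q` via the static transition relation. -/
def Reach (D : DATE Q E Θ) (q q' : Q) : Prop :=
  ∃ t : List E, q' ∈ D.approxRun {q} t

/-- `badAfter(q)`: `q` is reachable from the initial state and can reach a bad state. -/
def BadAfter (D : DATE Q E Θ) (q : Q) : Prop :=
  D.Reach D.init q ∧ ∃ q' ∈ D.bad, D.Reach q q'

/-- `goodEntryPoint(q)`. -/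
def GoodEntryPoint (D : DATE Q E Θ) (q : Q) : Prop :=
  ¬ D.BadAfter q ∧ ∃ q' : Q, ∃ e : E, D.BadAfter q' ∧ D.ApproxStep q' e q

/-- `useful(q)`. -/
def Useful (D : DATE Q E Θ) (q : Q) : Prop :=
  D.BadAfter q ∨ D.GoodEntryPoint q

/-- Restriction of a DATE to a set of transitions (`D ↾ δ'`). -/
def restrict (D : DATE Q E Θ) (δ' : Set (DTrans Q E Θ)) : DATE Q E Θ :=
  { D with delta := D.delta ∩ δ' }

/-- The reachability-reduced DATE `reach(D)`: only useful states and
transitions between useful states are kept. -/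
def reachReduce (D : DATE Q E Θ) : DATE Q E Θ :=
  D.restrict {d | D.Useful d.src ∧ D.Useful d.tgt}

/-- Alphabet restriction `D ↾ Σ'`. -/
def alphaRestrict (D : DATE Q E Θ) (A : Set E) : DATE Q E Θ :=
  D.restrict {d | d.ev ∈ A}

/-- `Σ(T)`: the set of events occurring in some trace of `T`. -/
def eventsOf (T : Set (List E)) : Set E :=
  {e | ∃ t ∈ T, e ∈ t}

/-- Component-wise union of two DATEs (sharing initial state and initial
monitoring state). -/
def union (D₁ D₂ : DATE Q E Θ) : DATE Q E Θ :=
  { init := D₁.init, th0 := D₁.th0, bad := D₁.bad ∪ D₂.bad,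
    delta := D₁.delta ∪ D₂.delta }

/-- Component-wise union of a family of DATEs, with given initial state and
initial monitoring state. -/
def unionFamily {ι : Type*} (q0 : Q) (θ0 : Θ) (f : ι → DATE Q E Θ) : DATE Q E Θ :=
  { init := q0, th0 := θ0, bad := ⋃ i, (f i).bad, delta := ⋃ i, (f i).delta }

/-- A ground trace `t` uses a transition `d`. -/
def Uses (D : DATE Q E Θ) (t : List E) (d : DTrans Q E Θ) : Prop :=
  (¬ ∀ θ : Θ, d.cond θ = false) ∧
    ∃ t' : List E, (t' ++ [d.ev]) <+: t ∧ d.src ∈ D.approxRun {D.init} t'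

/-- Satisfaction of a DATE by a static parametrised trace. -/
def SSat {α : Type*} (P : SProg α E) (st : List (α × E)) (D : DATE Q E Θ) : Prop :=
  ∀ x : α, ∀ t ∈ P.proj x st, Sat t D

/-- Equivalence of two DATEs with respect to a static program. -/
def SEquiv {α : Type*} (P : SProg α E) (D D' : DATE Q E Θ) : Prop :=
  ∀ st ∈ P.traces, SSat P st D ↔ SSat P st D'

end DATE

/-- Translation of a property automaton into a DATE with `Θ = Unit`:
each transition `(q, e, q')` becomes `q —e|true↦skip→ q'`. -/
def PA.toDATE {Q E : Type*} (π : PA Q E) : DATE Q E Unit :=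
  { init := π.init, th0 := (), bad := π.bad,
    delta := {d | d.cond = (fun _ => true) ∧ d.act = id ∧ d.tgt = π.next d.src d.ev} }

/-- The flow-sensitive residual `residual₂(D, P)`. -/
def DATE.residual2 {α Q E Θ : Type*} (D : DATE Q E Θ) (P : SProg α E) : DATE Q E Θ :=
  (D.restrict {d | ∃ t ∈ P.projAll, D.Uses t d}).reachReduce

/-- Consecutive application of the flow-sensitive residual over a list of
static program over-approximations. -/
def DATE.residual2List {α Q E Θ : Type*} (D : DATE Q E Θ) :
    List (SProg α E) → DATE Q E Θ
  | [] => D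
  | P :: Ps => DATE.residual2List (D.residual2 P) Ps

/-!
By determinism, a restricted DATE steps like the original whenever the transition firing in
the original is kept. The static run over-approximates the concrete one, so every transition
fired on a prefix of a program trace is used by that trace: restricting to used transitions
leaves the runs on program traces unchanged.

The reachability reduction preserves satisfaction of every trace. A run reaching a bad state
passes only through `badAfter` states, so it survives the reduction intact. A run from which
the reduction drops a transition gets stuck in a state that cannot lead to a bad state:
otherwise that state is `badAfter`, and the dropped transition's target is useful, being
`badAfter` or a good entry point.
-/

namespace DATE

variable {Q E Θ : Type*} (D : DATE Q E Θ)

def Fires (s : Q × Θ) (e : E) (d : DTrans Q E Θ) : Prop :=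
  d ∈ D.delta ∧ d.src = s.1 ∧ d.ev = e ∧ d.cond s.2 = true

def LeadsToBad (q : Q) : Prop :=
  ∃ q' ∈ D.bad, D.Reach q q'

variable {D}

lemma Fires.approxStep {s : Q × Θ} {e : E} {d : DTrans Q E Θ} (h : D.Fires s e d) :
    D.ApproxStep s.1 e d.tgt :=
  Or.inl ⟨d, h.1, h.2.1, h.2.2.1, rfl, fun hfalse => by simpa [hfalse s.2] using h.2.2.2⟩

lemma Fires.unique (hdet : D.Deterministic) {s : Q × Θ} {e : E} {d d' : DTrans Q E Θ}
    (h : D.Fires s e d) (h' : D.Fires s e d') : d = d' := by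
  by_contra hne
  exact hdet d h.1 d' h'.1 (h.2.1.trans h'.2.1.symm) (h.2.2.1.trans h'.2.2.1.symm) hne s.2
    ⟨h.2.2.2, h'.2.2.2⟩

lemma Deterministic.restrict (hdet : D.Deterministic) (δ' : Set (DTrans Q E Θ)) :
    (D.restrict δ').Deterministic :=
  fun d hd d' hd' => hdet d hd.1 d' hd'.1

lemma fires_restrict_iff {δ' : Set (DTrans Q E Θ)} {s : Q × Θ} {e : E} {d : DTrans Q E Θ} :
    (D.restrict δ').Fires s e d ↔ D.Fires s e d ∧ d ∈ δ' := by
  simp only [Fires, restrict, Set.mem_inter_iff]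
  tauto

lemma exists_fires_step {s : Q × Θ} {e : E} (h : ∃ d, D.Fires s e d) :
    ∃ d, D.Fires s e d ∧ D.step s e = (d.tgt, d.act s.2) :=
  ⟨h.choose, h.choose_spec, dif_pos h⟩

lemma step_eq_self {s : Q × Θ} {e : E} (h : ∀ d, ¬ D.Fires s e d) : D.step s e = s :=
  dif_neg fun ⟨d, hd⟩ => h d hd

lemma step_eq_of_fires (hdet : D.Deterministic) {s : Q × Θ} {e : E} {d : DTrans Q E Θ}
    (h : D.Fires s e d) : D.step s e = (d.tgt, d.act s.2) := by
  obtain ⟨d', hd', hstep⟩ := exists_fires_step ⟨d, h⟩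
  rw [hstep, hd'.unique hdet h]

lemma approxStep_step (s : Q × Θ) (e : E) : D.ApproxStep s.1 e (D.step s e).1 := by
  by_cases h : ∃ d, D.Fires s e d
  · obtain ⟨d, hd, hstep⟩ := exists_fires_step h
    rw [hstep]
    exact hd.approxStep
  · simp only [not_exists] at h
    rw [step_eq_self h]
    exact Or.inr ⟨rfl, fun ⟨d, hd, hsrc, hev, _, htrue⟩ =>
      h d ⟨hd, hsrc, hev, htrue s.2⟩⟩

lemma ApproxStep.of_restrict {δ' : Set (DTrans Q E Θ)} {q q' : Q} {e : E}
    (h : (D.restrict δ').ApproxStep q e q') : q' = q ∨ D.ApproxStep q e q' := by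
  rcases h with ⟨d, hd, hd'⟩ | ⟨rfl, -⟩
  · exact Or.inr (Or.inl ⟨d, hd.1, hd'⟩)
  · exact Or.inl rfl

lemma step_restrict (hdet : D.Deterministic) {δ' : Set (DTrans Q E Θ)} {s : Q × Θ} {e : E}
    (h : ∀ d, D.Fires s e d → d ∈ δ') : (D.restrict δ').step s e = D.step s e := by
  by_cases hf : ∃ d, D.Fires s e d
  · obtain ⟨d, hd⟩ := hf
    rw [step_eq_of_fires hdet hd,
      step_eq_of_fires (hdet.restrict δ') (fires_restrict_iff.2 ⟨hd, h d hd⟩)]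
  · simp only [not_exists] at hf
    rw [step_eq_self hf, step_eq_self fun d hd => hf d (fires_restrict_iff.1 hd).1]

lemma run_append (s : Q × Θ) (u v : List E) : D.run s (u ++ v) = D.run (D.run s u) v :=
  List.foldl_append

lemma run_concat (s : Q × Θ) (u : List E) (e : E) :
    D.run s (u ++ [e]) = D.step (D.run s u) e :=
  D.run_append s u [e]

lemma run_restrict (hdet : D.Deterministic) {δ' : Set (DTrans Q E Θ)} {s : Q × Θ} {t : List E}
    (h : ∀ u e, u ++ [e] <+: t → ∀ d, D.Fires (D.run s u) e d → d ∈ δ') :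
    (D.restrict δ').run s t = D.run s t := by
  induction t using List.reverseRecOn with
  | nil => rfl
  | append_singleton t e ih =>
    have hprefix : t <+: t ++ [e] := List.prefix_append t [e]
    rw [run_concat, run_concat, ih fun u e' hu => h u e' (hu.trans hprefix)]
    exact step_restrict hdet (h t e (List.prefix_refl _))

lemma approxRun_mono (t : List E) {S S' : Set Q} (h : S ⊆ S') :
    D.approxRun S t ⊆ D.approxRun S' t := by
  induction t generalizing S S' with
  | nil => exact h
  | cons e t ih => exact ih fun q' ⟨q, hq, hstep⟩ => ⟨q, h hq, hstep⟩

lemma run_mem_approxRun (t : List E) {s : Q × Θ} {S : Set Q} (h : s.1 ∈ S) :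
    (D.run s t).1 ∈ D.approxRun S t := by
  induction t generalizing s S with
  | nil => exact h
  | cons e t ih => exact ih ⟨s.1, h, approxStep_step s e⟩

lemma reach_run (s : Q × Θ) (t : List E) : D.Reach s.1 (D.run s t).1 :=
  ⟨t, run_mem_approxRun t rfl⟩

lemma Reach.of_approxStep {q q' q'' : Q} {e : E} (h : D.ApproxStep q e q')
    (h' : D.Reach q' q'') : D.Reach q q'' := by
  obtain ⟨t, ht⟩ := h'
  have hstep : q' ∈ D.approxSet {q} e := ⟨q, rfl, h⟩
  exact ⟨e :: t, approxRun_mono t (Set.singleton_subset_iff.2 hstep) ht⟩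

lemma LeadsToBad.of_approxStep {q q' : Q} {e : E} (h : D.ApproxStep q e q')
    (h' : D.LeadsToBad q') : D.LeadsToBad q :=
  let ⟨b, hb, hreach⟩ := h'
  ⟨b, hb, hreach.of_approxStep h⟩

lemma uses_of_fires {t v : List E} {e : E} {d : DTrans Q E Θ}
    (hd : D.Fires (D.run (D.init, D.th0) v) e d) (hv : v ++ [e] <+: t) : D.Uses t d :=
  ⟨fun hfalse => by simp [hfalse, Fires] at hd,
    v, hd.2.2.1 ▸ hv, hd.2.1 ▸ run_mem_approxRun v rfl⟩

lemma equivOn_restrict_used (hdet : D.Deterministic) (T : Set (List E)) :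
    EquivOn T (D.restrict {d | ∃ t ∈ T, D.Uses t d}) D := by
  intro t ht
  have hrun : ∀ u, u <+: t → (D.restrict {d | ∃ t ∈ T, D.Uses t d}).run (D.init, D.th0) u =
      D.run (D.init, D.th0) u := fun u hu =>
    run_restrict hdet fun v e hv d hd => ⟨t, ht, uses_of_fires hd (hv.trans hu)⟩
  exact forall₂_congr fun u hu => by
    show ((D.restrict _).run (D.init, D.th0) u).1 ∉ D.bad ↔ _
    rw [hrun u hu]

lemma badAfter_run_of_prefix {u v : List E} (hv : v <+: u)
    (hu : (D.run (D.init, D.th0) u).1 ∈ D.bad) : D.BadAfter (D.run (D.init, D.th0) v).1 := by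
  obtain ⟨w, rfl⟩ := hv
  rw [run_append] at hu
  exact ⟨reach_run (D.init, D.th0) v, _, hu, reach_run _ w⟩

lemma BadAfter.useful {q : Q} (h : D.BadAfter q) : D.Useful q := Or.inl h

lemma useful_of_approxStep {q q' : Q} {e : E} (hq : D.BadAfter q) (h : D.ApproxStep q e q') :
    D.Useful q' := by
  by_cases hq' : D.BadAfter q'
  · exact hq'.useful
  · exact Or.inr ⟨hq', q, e, hq, h⟩

lemma reachReduce_run_eq_of_bad (hdet : D.Deterministic) {u : List E}
    (hu : (D.run (D.init, D.th0) u).1 ∈ D.bad) :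
    D.reachReduce.run (D.init, D.th0) u = D.run (D.init, D.th0) u := by
  refine run_restrict hdet fun v e hv d hd => ⟨?_, ?_⟩
  · exact hd.2.1 ▸ (badAfter_run_of_prefix (List.prefix_append v [e] |>.trans hv) hu).useful
  · have htgt : d.tgt = (D.run (D.init, D.th0) (v ++ [e])).1 := by
      rw [run_concat, step_eq_of_fires hdet hd]
    exact htgt ▸ (badAfter_run_of_prefix hv hu).useful

lemma not_leadsToBad_reachReduce_step {s : Q × Θ} (hs : ¬ D.LeadsToBad s.1) (e : E) :
    ¬ D.LeadsToBad (D.reachReduce.step s e).1 := by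
  rcases (approxStep_step (D := D.reachReduce) s e).of_restrict with h | h
  · rwa [h]
  · exact fun hbad => hs (hbad.of_approxStep h)

lemma reachReduce_step_eq_or_not_leadsToBad (hdet : D.Deterministic) {s : Q × Θ}
    (hs : D.Reach D.init s.1) (e : E) :
    D.reachReduce.step s e = D.step s e ∨ ¬ D.LeadsToBad (D.reachReduce.step s e).1 := by
  by_cases hf : ∃ d, D.Fires s e d
  · obtain ⟨d, hd⟩ := hf
    by_cases hkeep : D.Useful d.src ∧ D.Useful d.tgt
    · exact Or.inl (step_restrict hdet fun d' hd' => hd.unique hdet hd' ▸ hkeep)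
    · right
      have hstay : D.reachReduce.step s e = s := step_eq_self fun d' hd' =>
        hkeep (hd.unique hdet (fires_restrict_iff.1 hd').1 ▸ (fires_restrict_iff.1 hd').2)
      rw [hstay]
      intro hbad
      have hsrc : D.BadAfter s.1 := ⟨hs, hbad⟩
      exact hkeep ⟨hd.2.1 ▸ hsrc.useful, useful_of_approxStep hsrc hd.approxStep⟩
  · exact Or.inl (step_restrict hdet fun d hd => absurd ⟨d, hd⟩ hf)

lemma reachReduce_run_eq_or_not_leadsToBad (hdet : D.Deterministic) (u : List E) :
    D.reachReduce.run (D.init, D.th0) u = D.run (D.init, D.th0) u ∨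
      ¬ D.LeadsToBad (D.reachReduce.run (D.init, D.th0) u).1 := by
  induction u using List.reverseRecOn with
  | nil => exact Or.inl rfl
  | append_singleton u e ih =>
    rw [run_concat, run_concat]
    rcases ih with heq | hdead
    · rw [heq]
      exact reachReduce_step_eq_or_not_leadsToBad hdet (reach_run (D.init, D.th0) u) e
    · exact Or.inr (not_leadsToBad_reachReduce_step hdead e)

lemma sat_reachReduce_iff (hdet : D.Deterministic) (t : List E) :
    Sat t D.reachReduce ↔ Sat t D := by
  refine ⟨fun hR u hu hbad => hR u hu ?_, fun hD u hu hbad => ?_⟩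
  · show (D.reachReduce.run (D.init, D.th0) u).1 ∈ D.bad
    rwa [reachReduce_run_eq_of_bad hdet hbad]
  · rcases reachReduce_run_eq_or_not_leadsToBad hdet u with heq | hdead
    · exact hD u hu (heq ▸ hbad)
    · exact hdead ⟨_, hbad, ⟨[], rfl⟩⟩

lemma sEquiv_of_equivOn_projAll {α : Type*} {P : SProg α E} {D' : DATE Q E Θ}
    (h : EquivOn P.projAll D D') : SEquiv P D D' :=
  fun st hst => forall_congr' fun x => forall₂_congr fun t ht => h t ⟨st, hst, x, ht⟩

end DATE

/-- The flow-sensitive residual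
`residual₂(D, P^S_Σ) = reach(D ↾ {d ∈ δ | ∃ t ∈ P^S_Σ ⇓ OId, uses(t, d)})` is
equivalent to the original DATE with respect to the static program. -/
theorem residual2_equiv {α Q E Θ : Type*} (D : DATE Q E Θ)
    (hdet : D.Deterministic) (P : SProg α E) :
    DATE.SEquiv P
      ((D.restrict {d | ∃ t ∈ P.projAll, D.Uses t d}).reachReduce) D :=
  DATE.sEquiv_of_equivOn_projAll fun t ht =>
    (DATE.sat_reachReduce_iff (hdet.restrict _) t).trans
      (DATE.equivOn_restrict_used hdet P.projAll t ht)
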